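/- arXiv:1705.03581 — 6 statements merged into one kernel-verified Lean document; each statement's English description precedes it below -/
import Mathlib

section
/- Let T_1, ..., T_k be a partition of an n-element set with |T_1| ≤ |T_2| ≤ ... ≤ |T_k|, and suppose k = δn + 1 for some δ ∈ (0,1). Let i be the maximum index such that |T_1 ∪ ... ∪ T_i| ≤ δn, and set A = T_1 ∪ ... ∪ T_i. Then |A| ≥ δn − √n. -/
/-!
Let `m = |T_i|` be the first part not in `A`. Since the parts are nonempty, `i ≤ |A|`, so at
least `k - i ≥ δn + 1 - |A|` parts of size `≥ m` lie outside `A`, whence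
`|A| + (δn + 1 - |A|) m ≤ n`. If `|A| < δn - √n`, then `m > δn - |A| > √n` by maximality
of `i` and `δn + 1 - |A| > √n + 1`, so the left side exceeds `(√n + 1) √n ≥ n`.
If no part is left out, then `|A| = n ≥ δn`.
-/

open Finset

section PrefixSums

variable {k : ℕ} {c : Fin k → ℕ} {i : ℕ}

theorem le_sum_filter_val_lt (hc : ∀ j, 0 < c j) (hi : i ≤ k) :
    i ≤ ∑ j ∈ univ.filter (fun j : Fin k => (j : ℕ) < i), c j :=
  calc i = #{j : Fin k | (j : ℕ) < i} • 1 := by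
        rw [Fin.card_filter_val_lt, min_eq_right hi, smul_eq_mul, mul_one]
    _ ≤ _ := card_nsmul_le_sum _ _ _ fun j _ => hc j

theorem sum_filter_val_lt_add_mul_le_sum (hc : Monotone c) (hi : i < k) :
    ∑ j ∈ univ.filter (fun j : Fin k => (j : ℕ) < i), c j + (k - i) * c ⟨i, hi⟩ ≤
      ∑ j, c j := by
  rw [← sum_filter_add_sum_filter_not univ (fun j : Fin k => (j : ℕ) < i)]
  have hcard : #{j : Fin k | ¬(j : ℕ) < i} = k - i := by
    have := card_filter_add_card_filter_not (s := (univ : Finset (Fin k))) fun j => (j : ℕ) < i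
    rw [Fin.card_filter_val_lt, card_univ, Fintype.card_fin, min_eq_right hi.le] at this
    omega
  have htail := card_nsmul_le_sum {j : Fin k | ¬(j : ℕ) < i} c (c ⟨i, hi⟩) fun j hj =>
    hc (Fin.mk_le_of_le_val (not_lt.mp (mem_filter.mp hj).2))
  rw [hcard, smul_eq_mul] at htail
  exact Nat.add_le_add_left htail _

end PrefixSums

theorem sub_sqrt_le_of_add_mul_le {a m n t x : ℝ} (ha : 0 ≤ a) (hn : 0 ≤ n)
    (htail : a + t * m ≤ n) (ht : x + 1 - a ≤ t) (hnext : x < a + m) : x - √n ≤ a := by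
  by_contra! h
  have hm : √n < m := by linarith
  have ht' : √n + 1 < t := by linarith
  have := mul_lt_mul'' ht' hm (by positivity) (Real.sqrt_nonneg n)
  linarith [Real.mul_self_sqrt hn, Real.sqrt_nonneg n]

theorem prefix_union_card_ge_general {α : Type*} [DecidableEq α] (n k : ℕ) (δ : ℝ)
    (hδ1 : δ < 1)
    (T : Fin k → Finset α)
    (hdisj : ∀ i j, i ≠ j → Disjoint (T i) (T j))
    (hne : ∀ i, (T i).Nonempty)
    (hsorted : ∀ i j : Fin k, i ≤ j → (T i).card ≤ (T j).card)
    (hcard : ∑ i, (T i).card = n)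
    (hk : (k : ℝ) = δ * n + 1)
    (i : ℕ)
    (A : Finset α)
    (hA : A = Finset.biUnion (Finset.univ.filter (fun j : Fin k => (j : ℕ) < i)) T)
    (hmax : ∀ hi : i < k, δ * n < ((A ∪ T ⟨i, hi⟩).card : ℝ)) :
    δ * n - Real.sqrt n ≤ (A.card : ℝ) := by
  have hAsum : #A = ∑ j ∈ univ.filter (fun j : Fin k => (j : ℕ) < i), #(T j) := by
    rw [hA]; exact card_biUnion fun x _ y _ hxy => hdisj x y hxy
  rcases lt_or_ge i k with hi | hi
  · have hiA : (i : ℝ) ≤ #A := by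
      exact_mod_cast hAsum ▸ le_sum_filter_val_lt (fun j => (hne j).card_pos) hi.le
    have htail : #A + (k - i) * #(T ⟨i, hi⟩) ≤ n :=
      hAsum ▸ hcard ▸ sum_filter_val_lt_add_mul_le_sum (fun _ _ h => hsorted _ _ h) hi
    have hnext : δ * n < #A + #(T ⟨i, hi⟩) :=
      (hmax hi).trans_le (by exact_mod_cast card_union_le _ _)
    refine sub_sqrt_le_of_add_mul_le (t := ((k - i : ℕ) : ℝ)) (by positivity) (by positivity)
      (by exact_mod_cast htail) ?_ hnext
    rw [Nat.cast_sub hi.le]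
    linarith
  · have hAn : #A = n := by
      rw [hAsum, ← hcard, filter_true_of_mem fun j _ => j.isLt.trans_le hi]
    rw [hAn]
    linarith [mul_le_of_le_one_left (Nat.cast_nonneg (α := ℝ) n) hδ1.le, Real.sqrt_nonneg n]

/-- Let `T 0, …, T (k-1)` be a partition of an `n`-element set into
pairwise disjoint nonempty parts sorted in nondecreasing order of size, with
`k = δn + 1`. If `A` is the union of the first `i` parts, `|A| ≤ δn`, and adding the
next part would exceed `δn` (maximality of `i`), then `|A| ≥ δn − √n`. -/
theorem prefix_union_card_ge {α : Type*} [DecidableEq α] (n k : ℕ) (δ : ℝ)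
    (hδ : 0 < δ) (hδ1 : δ < 1)
    (T : Fin k → Finset α)
    (hdisj : ∀ i j, i ≠ j → Disjoint (T i) (T j))
    (hne : ∀ i, (T i).Nonempty)
    (hsorted : ∀ i j : Fin k, i ≤ j → (T i).card ≤ (T j).card)
    (hcard : ∑ i, (T i).card = n)
    (hk : (k : ℝ) = δ * n + 1)
    (i : ℕ) (hik : i ≤ k)
    (A : Finset α)
    (hA : A = Finset.biUnion (Finset.univ.filter (fun j : Fin k => (j : ℕ) < i)) T)
    (hAle : (A.card : ℝ) ≤ δ * n)
    (hmax : ∀ hi : i < k, δ * n < ((A ∪ T ⟨i, hi⟩).card : ℝ)) :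
    δ * n - Real.sqrt n ≤ (A.card : ℝ) :=
  prefix_union_card_ge_general n k δ hδ1 T hdisj hne hsorted hcard hk i A hA hmax
end

section
/- Let G be a d-regular edge-weighted graph on n vertices such that every subset S of size exactly δn has Φ(S) ≥ 1 − η, with δn ≤ n/2. Then every partition of V into k = δn + 1 nonempty parts cuts edges of total weight at least (1 − η − 1/(δ√n))·δdn. -/
/-!
Let `A` be a maximal union of parts with `|A| ≤ δn`. Every part outside `A` has more than
`δn - |A|` vertices and, since there are `δn + 1` parts, at least `δn + 1 - |A|` of them lie
outside `A`; hence `(δn + 1 - |A|)² ≤ n`, i.e. `|A| ≥ δn - √n`. Extending `A` to a set of size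
exactly `δn` shows that the weight inside `A` is at most `ηdδn`, so `A` alone cuts at least
`d|A| - ηdδn`, and every edge leaving `A` is cut by the partition.
-/

open Finset

section Weights

variable {V : Type*}

def innerWeight (w : V → V → ℝ) (A : Finset V) : ℝ := ∑ u ∈ A, ∑ v ∈ A, w u v

lemma innerWeight_mono {w : V → V → ℝ} (hnonneg : ∀ u v, 0 ≤ w u v) {A S : Finset V}
    (h : A ⊆ S) : innerWeight w A ≤ innerWeight w S :=
  calc innerWeight w A ≤ ∑ u ∈ A, ∑ v ∈ S, w u v :=
        sum_le_sum fun u _ => sum_le_sum_of_subset_of_nonneg h fun v _ _ => hnonneg u v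
    _ ≤ innerWeight w S :=
        sum_le_sum_of_subset_of_nonneg h fun u _ _ => sum_nonneg fun v _ => hnonneg u v

variable [Fintype V] [DecidableEq V]

def cutWeight (w : V → V → ℝ) (A : Finset V) : ℝ := ∑ u ∈ A, ∑ v ∈ Aᶜ, w u v

variable {w : V → V → ℝ}

lemma innerWeight_add_cutWeight {d : ℝ} (hreg : ∀ u, ∑ v, w u v = d) (A : Finset V) :
    innerWeight w A + cutWeight w A = d * #A := by
  simp only [innerWeight, cutWeight, ← sum_add_distrib, sum_add_sum_compl, hreg, sum_const,
    nsmul_eq_mul, mul_comm]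

lemma cutWeight_compl (hsymm : ∀ u v, w u v = w v u) (A : Finset V) :
    cutWeight w Aᶜ = cutWeight w A := by
  rw [cutWeight, cutWeight, compl_compl, sum_comm]
  simp only [hsymm]

lemma cutWeight_le_sum_ite_ne {ι : Type*} [DecidableEq ι] (hnonneg : ∀ u v, 0 ≤ w u v)
    (c : V → ι) {A : Finset V} (hA : ∀ u ∈ A, ∀ v ∈ Aᶜ, c u ≠ c v) :
    cutWeight w A ≤ ∑ u ∈ A, ∑ v, if c u ≠ c v then w u v else 0 := by
  refine sum_le_sum fun u hu => ?_
  calc ∑ v ∈ Aᶜ, w u v = ∑ v ∈ Aᶜ, if c u ≠ c v then w u v else 0 :=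
        sum_congr rfl fun v hv => (if_pos (hA u hu v hv)).symm
    _ ≤ _ := sum_le_sum_of_subset_of_nonneg (subset_univ _) fun v _ _ => by
        split_ifs <;> simp [hnonneg]

lemma two_mul_cutWeight_le_sum_ite_ne {ι : Type*} [DecidableEq ι]
    (hsymm : ∀ u v, w u v = w v u) (hnonneg : ∀ u v, 0 ≤ w u v) (c : V → ι) {A : Finset V}
    (hA : ∀ u v, c u = c v → (u ∈ A ↔ v ∈ A)) :
    2 * cutWeight w A ≤ ∑ u, ∑ v, if c u ≠ c v then w u v else 0 := by
  have hin := cutWeight_le_sum_ite_ne hnonneg c (A := A) fun u hu v hv h =>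
    mem_compl.1 hv ((hA u v h).1 hu)
  have hout := cutWeight_le_sum_ite_ne hnonneg c (A := Aᶜ) fun u hu v hv h =>
    mem_compl.1 hu ((hA u v h).2 (by simpa using hv))
  rw [cutWeight_compl hsymm] at hout
  linarith [sum_add_sum_compl A fun u => ∑ v, if c u ≠ c v then w u v else 0]

lemma le_cutWeight_of_card_le {d η : ℝ} {m : ℕ} (hnonneg : ∀ u v, 0 ≤ w u v)
    (hreg : ∀ u, ∑ v, w u v = d)
    (hsound : ∀ S : Finset V, #S = m → (1 - η) * d * m ≤ cutWeight w S)
    (hm : m ≤ Fintype.card V) {A : Finset V} (hA : #A ≤ m) :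
    d * #A - η * d * m ≤ cutWeight w A := by
  obtain ⟨S, hAS, rfl⟩ := exists_superset_card_eq hA hm
  have hinnerS : innerWeight w S ≤ η * d * #S := by
    linarith [hsound S rfl, innerWeight_add_cutWeight hreg S]
  linarith [innerWeight_mono hnonneg hAS, innerWeight_add_cutWeight hreg A]

end Weights

section Partition

variable {V ι : Type*} [Fintype V] [DecidableEq ι]

lemma card_filter_mem_insert (c : V → ι) {T : Finset ι} {i : ι} (hi : i ∉ T) :
    #{v | c v ∈ insert i T} = #{v | c v = i} + #{v | c v ∈ T} := by
  simp only [← sum_card_fiberwise_eq_card_filter, sum_insert hi]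

theorem exists_card_filter_mem_le_and_sub_sq_le_card [Fintype ι] {c : V → ι}
    (hc : Function.Surjective c) {m : ℕ} (hm : m < Fintype.card ι) :
    ∃ T : Finset ι, #{v | c v ∈ T} ≤ m ∧ (m + 1 - #{v | c v ∈ T}) ^ 2 ≤ Fintype.card V := by
  obtain ⟨T, hT, hTmax⟩ := exists_max_image {T : Finset ι | #{v | c v ∈ T} ≤ m}
    (fun T => #{v | c v ∈ T}) ⟨∅, by simp⟩
  refine ⟨T, (mem_filter.1 hT).2, ?_⟩
  set a := #{v | c v ∈ T}
  have hfiber : ∀ i ∉ T, m + 1 - a ≤ #{v | c v = i} := by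
    intro i hi
    obtain ⟨v, rfl⟩ := hc i
    have hpos : 0 < #{u | c u = c v} := card_pos.2 ⟨v, by simp⟩
    have := hTmax (insert (c v) T)
    simp only [mem_filter, mem_univ, true_and, card_filter_mem_insert c hi] at this
    omega
  have hTa : #T ≤ a := card_le_card_of_surjOn c fun i hi => by
    obtain ⟨v, rfl⟩ := hc i
    exact ⟨v, by simpa using hi, rfl⟩
  have hTc : m + 1 - a ≤ #Tᶜ := by
    rw [card_compl]
    omega
  calc (m + 1 - a) ^ 2 ≤ #Tᶜ * (m + 1 - a) := by rw [sq]; exact Nat.mul_le_mul_right _ hTc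
    _ ≤ ∑ i ∈ Tᶜ, #{v | c v = i} := by
        rw [← smul_eq_mul, ← sum_const]; exact sum_le_sum fun i hi => hfiber i (mem_compl.1 hi)
    _ = #{v | c v ∈ Tᶜ} := sum_card_fiberwise_eq_card_filter _ _ _
    _ ≤ Fintype.card V := card_le_univ _

end Partition

lemma sub_sqrt_le_of_sub_sq_le {a m N : ℕ} (h : (m + 1 - a) ^ 2 ≤ N) : (m : ℝ) - √N ≤ a := by
  have hsqrt : ((m + 1 - a : ℕ) : ℝ) ≤ √N := Real.le_sqrt_of_sq_le (by exact_mod_cast h)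
  have : m + 1 ≤ (m + 1 - a) + a := by omega
  have : (m : ℝ) + 1 ≤ ((m + 1 - a : ℕ) : ℝ) + a := by exact_mod_cast this
  linarith

theorem kcut_soundness_general
    {V : Type*} [Fintype V] [DecidableEq V]
    (w : V → V → ℝ) (d δ η : ℝ) (n m k : ℕ)
    (hn : n = Fintype.card V)
    (hd : 0 ≤ d) (hδ : 0 < δ)
    (hm : (m : ℝ) = δ * n) (hm2 : 2 * m ≤ n) (hk : k = m + 1)
    (hsymm : ∀ u v, w u v = w v u) (hnonneg : ∀ u v, 0 ≤ w u v)
    (hreg : ∀ u, ∑ v, w u v = d)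
    (hsound : ∀ S : Finset V, S.card = m →
      (1 - η) * d * m ≤ ∑ u ∈ S, ∑ v ∈ Sᶜ, w u v)
    (c : V → Fin k) (hsurj : Function.Surjective c) :
    (1 - η - 1 / (δ * Real.sqrt n)) * (δ * d * n)
      ≤ (1 / 2) * ∑ u, ∑ v, (if c u ≠ c v then w u v else 0) := by
  obtain ⟨T, hTm, hTn⟩ :=
    exists_card_filter_mem_le_and_sub_sq_le_card hsurj (m := m) (by simp [hk])
  set A : Finset V := {v | c v ∈ T}
  have hA_large : (m : ℝ) - √n ≤ #A := hn ▸ sub_sqrt_le_of_sub_sq_le hTn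
  have hcut : d * #A - η * d * m ≤ cutWeight w A :=
    le_cutWeight_of_card_le hnonneg hreg hsound (by omega) hTm
  have hpart : 2 * cutWeight w A ≤ ∑ u, ∑ v, if c u ≠ c v then w u v else 0 :=
    two_mul_cutWeight_le_sum_ite_ne hsymm hnonneg c fun u v h => by
      simp only [A, mem_filter, mem_univ, true_and, h]
  have hscale : 1 / (δ * √n) * (δ * d * n) = d * √n :=
    calc 1 / (δ * √n) * (δ * d * n) = d * (n / √n) := by field_simp
      _ = d * √n := by rw [Real.div_sqrt]
  have hm' : δ * d * n = d * m := by rw [hm]; ring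
  calc (1 - η - 1 / (δ * √n)) * (δ * d * n) = (1 - η) * (d * m) - d * √n := by
        rw [sub_mul, hscale, hm']
    _ ≤ d * #A - η * d * m := by linarith [mul_le_mul_of_nonneg_left hA_large hd]
    _ ≤ cutWeight w A := hcut
    _ ≤ _ := by linarith

/-- In a `d`-regular edge-weighted graph on `n` vertices in which every
set of size exactly `δn ≤ n/2` has expansion at least `1 − η`, every partition of the
vertices into `k = δn + 1` nonempty parts (given by a surjective coloring
`c : V → Fin k`) cuts edges of total weight at least `(1 − η − 1/(δ√n))·δ·d·n`. -/
theorem kcut_soundness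
    {V : Type*} [Fintype V] [DecidableEq V]
    (w : V → V → ℝ) (d δ η : ℝ) (n m k : ℕ)
    (hn : n = Fintype.card V) (hn0 : 0 < n)
    (hd : 0 ≤ d) (hδ : 0 < δ) (hη : 0 ≤ η)
    (hm : (m : ℝ) = δ * n) (hm2 : 2 * m ≤ n) (hk : k = m + 1)
    (hsymm : ∀ u v, w u v = w v u) (hnonneg : ∀ u v, 0 ≤ w u v)
    (hreg : ∀ u, ∑ v, w u v = d)
    (hsound : ∀ S : Finset V, S.card = m →
      (1 - η) * d * m ≤ ∑ u ∈ S, ∑ v ∈ Sᶜ, w u v)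
    (c : V → Fin k) (hsurj : Function.Surjective c) :
    (1 - η - 1 / (δ * Real.sqrt n)) * (δ * d * n)
      ≤ (1 / 2) * ∑ u, ∑ v, (if c u ≠ c v then w u v else 0) :=
  kcut_soundness_general w d δ η n m k hn hd hδ hm hm2 hk hsymm hnonneg hreg hsound c hsurj
end

section
/- Let G be a d-regular edge-weighted graph on n vertices such that every S with |S| ∈ [δn/M, δnM] has Φ(S) ≥ 1 − η. Form G' by adding a vertex v* with a self-loop of weight dδn/2, and let k = δn + 1. Then every set T' ⊆ V ∪ {v*} with |T'| ≥ k has density at most (dδn/k)·(1/2 + max{η, 1/(δn) + 1/M}). -/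
/-!
Write `x = δn`, `t = |T|`, `s = |T'| ≥ k = x + 1` and `W = ∑_{u,v ∈ T} w u v`, so that the density of
`T'` is `(β·dx/2 + W/2)/s` with `β = [v* ∈ T']`. Regularity splits `d·t` into `W` plus the cut of `T`,
so always `W ≤ d·t`, and `W ≤ η·d·t` whenever the expansion hypothesis applies to `T`.
If `t ≤ xM`, the self-loop contributes at most `dx/(2k)` and `W/(2s) ≤ (dx/k)·max{η, 1/x + 1/M}`:
by expansion when `t ≥ x/M`, and because `t < x/M ≤ x·(1/x + 1/M)` otherwise.
If `t > xM`, the trivial bound `W ≤ d·t` suffices, since the loop weight `dx/2` is then tiny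
compared with `s·d·x/M`.
-/

open Finset

section Weights

variable {V : Type*} [Fintype V] [DecidableEq V] {w : V → V → ℝ} {d : ℝ}

theorem inner_add_cut_eq_of_regular (hreg : ∀ u, ∑ v, w u v = d) (T : Finset V) :
    ∑ u ∈ T, ∑ v ∈ T, w u v + ∑ u ∈ T, ∑ v ∈ Tᶜ, w u v = d * #T := by
  rw [← sum_add_distrib, mul_comm, ← nsmul_eq_mul, ← sum_const]
  exact sum_congr rfl fun u _ => by rw [sum_add_sum_compl, hreg]

theorem inner_le_of_regular (hnonneg : ∀ u v, 0 ≤ w u v)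
    (hreg : ∀ u, ∑ v, w u v = d) (T : Finset V) :
    ∑ u ∈ T, ∑ v ∈ T, w u v ≤ d * #T := by
  have hcut : 0 ≤ ∑ u ∈ T, ∑ v ∈ Tᶜ, w u v :=
    sum_nonneg fun _ _ => sum_nonneg fun _ _ => hnonneg _ _
  linarith [inner_add_cut_eq_of_regular hreg T]

theorem inner_le_of_expansion (hreg : ∀ u, ∑ v, w u v = d) {η : ℝ}
    {T : Finset V} (hT : (1 - η) * d * #T ≤ ∑ u ∈ T, ∑ v ∈ Tᶜ, w u v) :
    ∑ u ∈ T, ∑ v ∈ T, w u v ≤ η * (d * #T) := by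
  linarith [inner_add_cut_eq_of_regular hreg T]

end Weights

section Density

variable {d x η M t β W : ℝ}

theorem one_add_div_le_mul_max (hx : 0 < x) (hM : 0 < M) :
    1 + x / M ≤ x * max η (1 / x + 1 / M) := by
  calc 1 + x / M = x * (1 / x + 1 / M) := by field_simp
    _ ≤ x * max η (1 / x + 1 / M) := by gcongr; exact le_max_right _ _

theorem inner_mul_le_of_le_mul (hd : 0 ≤ d) (hη : 0 ≤ η) (hM : 1 ≤ M) (hx : 1 ≤ x)
    (hβ0 : 0 ≤ β) (hk : x + 1 ≤ t + β) (htM : t ≤ x * M) (hW : W ≤ d * t)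
    (hWexp : x / M ≤ t → t ≤ x * M → W ≤ η * (d * t)) :
    W * (x + 1) ≤ 2 * (d * x * max η (1 / x + 1 / M)) * (t + β) := by
  set m := max η (1 / x + 1 / M)
  have hm : 0 ≤ m := hη.trans (le_max_left _ _)
  have hdxm : 0 ≤ d * x * m := by positivity
  rcases le_or_gt (x / M) t with hlarge | hsmall
  · have ht : 0 ≤ t := (div_nonneg (by linarith) (by linarith)).trans hlarge
    calc W * (x + 1) ≤ m * (d * t) * (2 * x) := by
          gcongr
          · exact (hWexp hlarge htM).trans (by gcongr; exact le_max_left _ _)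
          · linarith
      _ ≤ 2 * (d * x * m) * (t + β) := by nlinarith
  · have htm : t ≤ x * m := by
      linarith [one_add_div_le_mul_max (η := η) (by linarith : 0 < x) (by linarith : 0 < M)]
    nlinarith [mul_le_mul_of_nonneg_left htm hd, mul_le_mul_of_nonneg_right hk hdxm]

theorem density_le_of_inner_le (hd : 0 ≤ d) (hη : 0 ≤ η) (hM : 1 ≤ M) (hx : 1 ≤ x)
    (hβ0 : 0 ≤ β) (hβ1 : β ≤ 1) (hk : x + 1 ≤ t + β) (hW : W ≤ d * t)
    (hWexp : x / M ≤ t → t ≤ x * M → W ≤ η * (d * t)) :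
    (β * (d * x) / 2 + 1 / 2 * W) / (t + β)
      ≤ d * x / (x + 1) * (1 / 2 + max η (1 / x + 1 / M)) := by
  set m := max η (1 / x + 1 / M)
  suffices h : (β * (d * x) + W) * (x + 1) ≤ d * x * (1 + 2 * m) * (t + β) by
    rw [div_le_iff₀ (by linarith)]
    field_simp
    linarith
  have hdx : 0 ≤ d * x := by positivity
  rcases le_or_gt t (x * M) with hsmall | hlarge
  · have hloop : β * (x + 1) ≤ t + β := by nlinarith
    nlinarith [inner_mul_le_of_le_mul hd hη hM hx hβ0 hk hsmall hW hWexp,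
      mul_le_mul_of_nonneg_left hloop hdx]
  · have hxm := one_add_div_le_mul_max (η := η) (by linarith : 0 < x) (by linarith : 0 < M)
    have hloop : β * x * M ≤ 2 * (t + β) := by nlinarith
    have hloop' : β * x * x ≤ 2 * (t + β) * (x / M) := by
      rw [mul_div_assoc', le_div_iff₀ (by linarith)]
      nlinarith
    nlinarith [mul_le_mul_of_nonneg_left hloop' hd,
      mul_le_mul_of_nonneg_right hW (by linarith : 0 ≤ x + 1), mul_le_mul_of_nonneg_left hxm (by nlinarith : 0 ≤ 2 * d * (t + β))]

end Density

theorem dalks_soundness_general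
    {V : Type*} [Fintype V] [DecidableEq V]
    (w : V → V → ℝ) (d δ η M : ℝ) (n k : ℕ)
    (hd : 0 ≤ d) (hη : 0 ≤ η) (hM : 1 ≤ M)
    (hδn : 1 ≤ δ * n) (hk : (k : ℝ) = δ * n + 1)
    (hnonneg : ∀ u v, 0 ≤ w u v)
    (hreg : ∀ u, ∑ v, w u v = d)
    (hsound : ∀ S : Finset V, δ * n / M ≤ (S.card : ℝ) → (S.card : ℝ) ≤ δ * n * M →
      (1 - η) * d * S.card ≤ ∑ u ∈ S, ∑ v ∈ Sᶜ, w u v)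
    (T : Finset V) (b : Bool)
    (hT : (k : ℝ) ≤ (T.card : ℝ) + (if b then 1 else 0)) :
    ((if b then d * δ * n / 2 else 0) + (1 / 2) * ∑ u ∈ T, ∑ v ∈ T, w u v) /
        ((T.card : ℝ) + (if b then 1 else 0))
      ≤ d * δ * n / k * (1 / 2 + max η (1 / (δ * n) + 1 / M)) := by
  have hloop_weight :
      (if b then d * δ * n / 2 else 0) = (if b then 1 else 0) * (d * (δ * n)) / 2 := by
    cases b <;> simp [mul_assoc]
  rw [hk] at hT ⊢
  rw [hloop_weight, mul_assoc d]
  exact density_le_of_inner_le hd hη hM hδn (by split <;> norm_num) (by split <;> norm_num) hT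
    (inner_le_of_regular hnonneg hreg T)
    fun h₁ h₂ => inner_le_of_expansion hreg (hsound T h₁ h₂)

/-- Soundness for Densest At-Least-`k`-Subgraph: in a `d`-regular graph
in which every `S` with `|S| ∈ [δn/M, δnM]` has expansion at least `1 − η`, after adding
the vertex `v*` with a self-loop of weight `dδn/2`, every set `T'` of at least
`k = δn + 1` vertices (described by its part `T` inside `V` and a Boolean `b` recording
whether `v* ∈ T'`) has density at most `(dδn/k)·(1/2 + max{η, 1/(δn) + 1/M})`. -/
theorem dalks_soundness
    {V : Type*} [Fintype V] [DecidableEq V]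
    (w : V → V → ℝ) (d δ η M : ℝ) (n k : ℕ)
    (hn : n = Fintype.card V) (hd : 0 ≤ d) (hη : 0 ≤ η) (hM : 1 ≤ M)
    (hδn : 1 ≤ δ * n) (hk : (k : ℝ) = δ * n + 1) (hhalf : δ * n * M ≤ n / 2)
    (hsymm : ∀ u v, w u v = w v u) (hnonneg : ∀ u v, 0 ≤ w u v)
    (hreg : ∀ u, ∑ v, w u v = d)
    (hsound : ∀ S : Finset V, δ * n / M ≤ (S.card : ℝ) → (S.card : ℝ) ≤ δ * n * M →
      (1 - η) * d * S.card ≤ ∑ u ∈ S, ∑ v ∈ Sᶜ, w u v)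
    (T : Finset V) (b : Bool)
    (hT : (k : ℝ) ≤ (T.card : ℝ) + (if b then 1 else 0)) :
    ((if b then d * δ * n / 2 else 0) + (1 / 2) * ∑ u ∈ T, ∑ v ∈ T, w u v) /
        ((T.card : ℝ) + (if b then 1 else 0))
      ≤ d * δ * n / k * (1 / 2 + max η (1 / (δ * n) + 1 / M)) :=
  dalks_soundness_general w d δ η M n k hd hη hM hδn hk hnonneg hreg hsound T b hT
end

section
/- Let H = (V_H, E_H) be a hypergraph with n = |E_H| hyperedges such that for every T ⊆ V_H with |T| ≤ |V_H|/2 we have |E_H(T)| ≤ εn. Construct the bipartite graph G with both sides equal to E_H and (e1, e2) an edge iff e1 ∩ e2 = ∅. Then G does not contain K_{εn+1, εn+1} as a subgraph. -/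
open Finset

/-!
The unions of the two sides of a biclique are disjoint vertex sets, so one of them has at most
half of the vertices, yet it contains all the (more than `εn`) hyperedges of its side.
-/

theorem Finset.two_mul_card_le_or_of_disjoint {α : Type*} [Fintype α] {s t : Finset α}
    (h : Disjoint s t) : 2 * #s ≤ Fintype.card α ∨ 2 * #t ≤ Fintype.card α := by
  have := card_le_univ (s.disjUnion t h)
  rw [card_disjUnion] at this
  omega

theorem Finset.card_le_card_filter_subset_sup_id {α : Type*} [DecidableEq α]
    {C E : Finset (Finset α)} (hCE : C ⊆ E) : #C ≤ #(E.filter (· ⊆ C.sup id)) :=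
  card_le_card fun _ he => mem_filter.2 ⟨hCE he, le_sup (f := id) he⟩

theorem muchb_to_biclique_soundness_general
    {V : Type*} [Fintype V] [DecidableEq V]
    (E : Finset (Finset V)) (ε : ℝ) (n : ℕ)
    (hsound : ∀ T : Finset V, 2 * T.card ≤ Fintype.card V →
      ((E.filter (· ⊆ T)).card : ℝ) ≤ ε * n) :
    ¬ ∃ A B : Finset (Finset V), A ⊆ E ∧ B ⊆ E ∧
        ε * n + 1 ≤ (A.card : ℝ) ∧ ε * n + 1 ≤ (B.card : ℝ) ∧
        ∀ e₁ ∈ A, ∀ e₂ ∈ B, Disjoint e₁ e₂ := by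
  rintro ⟨A, B, hAE, hBE, hA, hB, hAB⟩
  have not_small : ∀ C ⊆ E, ε * n + 1 ≤ (#C : ℝ) → ¬ 2 * #(C.sup id) ≤ Fintype.card V :=
    fun C hCE hC hsmall => by
      have := (Nat.cast_le (α := ℝ)).2 (card_le_card_filter_subset_sup_id hCE)
      linarith [hsound _ hsmall]
  have hdisj : Disjoint (A.sup id) (B.sup id) :=
    Finset.disjoint_sup_left.2 fun a ha => Finset.disjoint_sup_right.2 fun b hb => hAB a ha b hb
  rcases two_mul_card_le_or_of_disjoint hdisj with h | h
  exacts [not_small A hAE hA h, not_small B hBE hB h]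

/-- Soundness of the reduction from Max UnCut Hypergraph Bisection to
biclique: if every `T ⊆ V_H` with `|T| ≤ |V_H|/2` contains at most `εn` of the `n`
hyperedges, then the bipartite graph with both sides the hyperedge set and edges between
disjoint hyperedges has no `K_{εn+1, εn+1}` subgraph. -/
theorem muchb_to_biclique_soundness
    {V : Type*} [Fintype V] [DecidableEq V]
    (E : Finset (Finset V)) (ε : ℝ) (hε : 0 ≤ ε) (n : ℕ) (hn : n = E.card)
    (hsound : ∀ T : Finset V, 2 * T.card ≤ Fintype.card V →
      ((E.filter (· ⊆ T)).card : ℝ) ≤ ε * n) :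
    ¬ ∃ A B : Finset (Finset V), A ⊆ E ∧ B ⊆ E ∧
        ε * n + 1 ≤ (A.card : ℝ) ∧ ε * n + 1 ≤ (B.card : ℝ) ∧
        ∀ e₁ ∈ A, ∀ e₂ ∈ B, Disjoint e₁ e₂ :=
  muchb_to_biclique_soundness_general E ε n hsound
end

section
/- Fix a set L of size n, δ ∈ (0,1), positive integers k and N with δ^k = 1/N, and ε ∈ (0,1) with N^ε = ω(n²) asymptotically. Sample U^1,...,U^N independently and uniformly from L^k. Then with probability at least 1 − 2^{−Ω(n²)}, there is no subset S ⊆ L with |S| < δn such that at least N^ε of the tuples U^i lie entirely in S^k. -/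
open Finset

/-! Union bound: for a fixed `S` with `|S| < δn`, a tuple lies in `S^k` with probability at most
`δ^k = 1/N`, so `m` prescribed tuples all do with probability at most `N^{-m}`; there are
`binom N m ≤ N^m / m!` choices of the `m` tuples, so `S` captures `m ≥ N^ε` tuples with
probability at most `1 / m! ≤ 2^{-(m-1)}`. Summing over the at most `2^n` sets `S`, and taking
`m ≥ 4n²`, bounds the bad event by `2^{-n²}`. -/

open Nat in
theorem Nat.choose_div_pow_le_inv_two_pow (N m : ℕ) :
    (N.choose m : ℝ) / N ^ m ≤ (2 ^ (m - 1) : ℝ)⁻¹ := by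
  rcases Nat.eq_zero_or_pos N with rfl | hN
  · rcases m with _ | m <;> simp
  have hfact : (2 ^ (m - 1) : ℝ) ≤ m ! := by
    rcases m with _ | m
    · simp
    · have : 2 ^ m ≤ (m + 1)! := by
        simpa [add_comm 1 m] using Nat.factorial_mul_pow_le_factorial (m := 1) (n := m)
      rw [Nat.add_sub_cancel]
      exact_mod_cast this
  calc (N.choose m : ℝ) / N ^ m ≤ (N ^ m / m ! : ℝ) / N ^ m := by
        gcongr; exact Nat.choose_le_pow_div m N
    _ = (m ! : ℝ)⁻¹ := by field_simp
    _ ≤ _ := by gcongr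

theorem card_filter_le_card_mul_of_exists {σ X : Type*} [Fintype X] {Q : X → Prop}
    [DecidablePred Q] (A : Finset σ) (P : σ → X → Prop) [∀ S, DecidablePred (P S)]
    (hQ : ∀ x, Q x → ∃ S ∈ A, P S x) {b : ℝ} (hb : ∀ S ∈ A, (#{x | P S x} : ℝ) ≤ b) :
    (#{x | Q x} : ℝ) ≤ #A * b := by
  classical
  have hcover : ({x | Q x} : Finset X) ⊆ A.biUnion fun S => {x | P S x} := by
    intro x hx
    obtain ⟨S, hS, hx⟩ := hQ x (mem_filter.mp hx).2
    exact mem_biUnion.mpr ⟨S, hS, mem_filter.mpr ⟨mem_univ x, hx⟩⟩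
  calc (#{x | Q x} : ℝ) ≤ ∑ S ∈ A, (#{x | P S x} : ℝ) := by
        exact_mod_cast (card_le_card hcover).trans card_biUnion_le
    _ ≤ #A * b := by simpa using sum_le_card_nsmul _ _ _ hb

section
variable {ι β : Type*} [Fintype ι] [DecidableEq ι] [Fintype β] [DecidableEq β]

theorem card_filter_forall_mem_eq (I : Finset ι) (t : Finset β) :
    #{f : ι → β | ∀ i ∈ I, f i ∈ t} = #t ^ #I * Fintype.card β ^ (Fintype.card ι - #I) := by
  have hpi : ({f : ι → β | ∀ i ∈ I, f i ∈ t} : Finset _) =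
      Fintype.piFinset fun i => if i ∈ I then t else univ := by
    ext f
    simp only [mem_filter, mem_univ, true_and, Fintype.mem_piFinset]
    exact forall_congr' fun i => by split_ifs <;> simp [*]
  simp only [hpi, Fintype.card_piFinset, apply_ite, Finset.card_univ]
  rw [prod_ite, prod_const, prod_const, filter_mem_eq_inter, univ_inter, filter_not,
    filter_mem_eq_inter, univ_inter, card_sdiff_of_subset (subset_univ I), Finset.card_univ]

theorem card_filter_le_card_filter_mem_le_choose (t : Finset β) (m : ℕ) :
    #{f : ι → β | m ≤ #{i | f i ∈ t}} ≤
      (Fintype.card ι).choose m * (#t ^ m * Fintype.card β ^ (Fintype.card ι - m)) := by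
  have hcover : ({f : ι → β | m ≤ #{i | f i ∈ t}} : Finset _) ⊆
      (powersetCard m univ).biUnion fun I => {f | ∀ i ∈ I, f i ∈ t} := by
    intro f hf
    obtain ⟨I, hI, hIcard⟩ := exists_subset_card_eq (mem_filter.mp hf).2
    simp only [mem_biUnion, mem_powersetCard, mem_filter, mem_univ, true_and]
    exact ⟨I, ⟨subset_univ I, hIcard⟩, fun i hi => (mem_filter.mp (hI hi)).2⟩
  calc _ ≤ _ := card_le_card hcover
    _ ≤ ∑ I ∈ powersetCard m univ, #{f : ι → β | ∀ i ∈ I, f i ∈ t} := card_biUnion_le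
    _ = _ := by
      rw [sum_congr rfl fun I hI => by rw [card_filter_forall_mem_eq, (mem_powersetCard.mp hI).2],
        sum_const, card_powersetCard, Finset.card_univ, smul_eq_mul]

theorem card_filter_le_card_filter_mem_le_choose_mul_pow (t : Finset β) {m : ℕ}
    (hm : m ≤ Fintype.card ι) {q : ℝ} (ht : (#t : ℝ) ≤ q * Fintype.card β) :
    (#{f : ι → β | m ≤ #{i | f i ∈ t}} : ℝ) ≤
      (Fintype.card ι).choose m * q ^ m * Fintype.card β ^ Fintype.card ι := by
  calc (#{f : ι → β | m ≤ #{i | f i ∈ t}} : ℝ)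
      ≤ (Fintype.card ι).choose m * ((#t : ℝ) ^ m * Fintype.card β ^ (Fintype.card ι - m)) := by
        exact_mod_cast card_filter_le_card_filter_mem_le_choose t m
    _ ≤ (Fintype.card ι).choose m *
          ((q * Fintype.card β) ^ m * Fintype.card β ^ (Fintype.card ι - m)) := by
        gcongr
    _ = _ := by
        rw [mul_pow, mul_assoc, mul_assoc, ← pow_add, Nat.add_sub_cancel' hm, ← mul_assoc]

theorem card_filter_le_card_filter_mem_le_inv_two_pow (t : Finset β)
    (ht : (#t : ℝ) ≤ (Fintype.card ι : ℝ)⁻¹ * Fintype.card β) {m : ℕ} (hm : m ≤ Fintype.card ι) :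
    (#{f : ι → β | m ≤ #{i | f i ∈ t}} : ℝ) ≤ (2 ^ (m - 1) : ℝ)⁻¹ * Fintype.card (ι → β) := by
  calc (#{f : ι → β | m ≤ #{i | f i ∈ t}} : ℝ)
      ≤ (Fintype.card ι).choose m * (Fintype.card ι : ℝ)⁻¹ ^ m *
          Fintype.card β ^ Fintype.card ι :=
        card_filter_le_card_filter_mem_le_choose_mul_pow t hm ht
    _ = ((Fintype.card ι).choose m / Fintype.card ι ^ m : ℝ) * Fintype.card (ι → β) := by
        rw [Fintype.card_fun]; push_cast; ring
    _ ≤ _ := by gcongr; exact Nat.choose_div_pow_le_inv_two_pow _ m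

end

theorem card_filter_le_card_filter_forall_mem_le_inv_two_pow {ι κ α : Type*} [Fintype ι]
    [DecidableEq ι] [Fintype κ] [DecidableEq κ] [Fintype α] [DecidableEq α] {δ : ℝ}
    (hδ : δ ^ Fintype.card κ = (Fintype.card ι : ℝ)⁻¹) {S : Finset α}
    (hS : (#S : ℝ) ≤ δ * Fintype.card α) {m : ℕ} (hm : m ≤ Fintype.card ι) :
    (#{U : ι → κ → α | m ≤ #{i | ∀ j, U i j ∈ S}} : ℝ) ≤
      (2 ^ (m - 1) : ℝ)⁻¹ * Fintype.card (ι → κ → α) := by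
  have hSk : (#(Fintype.piFinset fun _ : κ => S) : ℝ) ≤
      (Fintype.card ι : ℝ)⁻¹ * Fintype.card (κ → α) := by
    calc (#(Fintype.piFinset fun _ : κ => S) : ℝ) = (#S : ℝ) ^ Fintype.card κ := by simp
      _ ≤ (δ * Fintype.card α) ^ Fintype.card κ := by gcongr
      _ = _ := by simp [mul_pow, hδ]
  simpa only [Fintype.mem_piFinset] using card_filter_le_card_filter_mem_le_inv_two_pow _ hSk hm

/-- Randomized graph product, soundness side. There are absolute
constants `c, C > 0` such that: for `δ ∈ (0,1)`, `k` with `δ^k = 1/N`, and `ε` with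
`N^ε ≥ C·n²`, when `N` tuples `U^i` are drawn independently and uniformly from `L^k`
(`L` of size `n`), the probability that some subset `S ⊆ L` with `|S| < δn` contains at
least `N^ε` of the tuples entirely inside `S^k` is at most `2^{−c·n²}`. -/
theorem randomized_graph_product_soundness :
    ∃ c C : ℝ, 0 < c ∧ 0 < C ∧
      ∀ (n k N : ℕ) (δ ε : ℝ), 0 < n → 0 < k → 0 < N →
        0 < δ → δ < 1 → 0 < ε → ε < 1 →
        δ ^ k = 1 / (N : ℝ) → C * (n : ℝ) ^ 2 ≤ (N : ℝ) ^ ε →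
        ((Finset.univ.filter
            (fun U : Fin N → Fin k → Fin n =>
              ∃ S : Finset (Fin n), (S.card : ℝ) < δ * n ∧
                (N : ℝ) ^ ε ≤ ((Finset.univ.filter fun i => ∀ j, U i j ∈ S).card : ℝ))).card : ℝ)
          / (Fintype.card (Fin N → Fin k → Fin n) : ℝ)
        ≤ (2 : ℝ) ^ (-(c * (n : ℝ) ^ 2)) := by
  refine ⟨1, 4, one_pos, four_pos, ?_⟩
  rintro n k N δ ε hn - hN - - - hε1 hδk hNε
  have : NeZero n := ⟨hn.ne'⟩
  set m := ⌈(N : ℝ) ^ ε⌉₊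
  have hmN : m ≤ Fintype.card (Fin N) := by
    rw [Fintype.card_fin]
    exact Nat.ceil_le.mpr (Real.rpow_le_self_of_one_le (by exact_mod_cast hN) hε1.le)
  have hm : n + n ^ 2 ≤ m - 1 := by
    have : 4 * n ^ 2 ≤ m := by exact_mod_cast hNε.trans (Nat.le_ceil _)
    have : n ≤ n ^ 2 := Nat.le_self_pow two_ne_zero n
    omega
  have hδ : δ ^ Fintype.card (Fin k) = (Fintype.card (Fin N) : ℝ)⁻¹ := by simp [hδk]
  set small : Finset (Finset (Fin n)) := {S | (#S : ℝ) < δ * n}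
  have hsmall : (#small : ℝ) ≤ 2 ^ n := by
    exact_mod_cast (card_filter_le _ _).trans_eq (by simp)
  rw [div_le_iff₀ (by positivity)]
  calc _ ≤ #small * ((2 ^ (m - 1) : ℝ)⁻¹ * Fintype.card (Fin N → Fin k → Fin n)) :=
        card_filter_le_card_mul_of_exists small (fun S U => m ≤ #{i | ∀ j, U i j ∈ S})
          (fun _ ⟨S, hS, hcount⟩ => ⟨S, mem_filter.mpr ⟨mem_univ S, hS⟩, Nat.ceil_le.mpr hcount⟩)
          fun S hS => by
            have hS : (#S : ℝ) ≤ δ * Fintype.card (Fin n) := by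
              simpa using (mem_filter.mp hS).2.le
            -- the statement decides `∀ j : Fin k, _` by `Nat.decidableForallFin`
            convert card_filter_le_card_filter_forall_mem_le_inv_two_pow hδ hS hmN
    _ ≤ 2 ^ n * ((2 ^ (n + n ^ 2) : ℝ)⁻¹ * Fintype.card (Fin N → Fin k → Fin n)) := by
        gcongr
        exact one_le_two
    _ = _ := by
      rw [pow_add, mul_inv, ← mul_assoc, ← mul_assoc, mul_inv_cancel₀ (by positivity), one_mul,
        one_mul, Real.rpow_neg zero_le_two, ← Nat.cast_pow, Real.rpow_natCast]
end

section
/- Let E_1, ..., E_k be events in a probability space and G_1, ..., G_k further events such that: (i) Pr[E_j | ¬E_1 ∧ ... ∧ ¬E_{j−1}] = c_1 for all j, (ii) Pr[G_q | E_j ∧ ¬G_1 ∧ ... ∧ ¬G_{q−1}] ≤ c_2 for all q < j, and (iii) Pr[Success | E_j ∧ ¬G_1 ∧ ... ∧ ¬G_{j−1}] ≥ 1 − c_3 for all j, where the E_j are mutually exclusive. Then Pr[Success] ≥ (1 − c_3)·∑_{j=1}^k c_1(1 − c_1)^{j−1}(1 − c_2)^{j−1} ≥ 1 − c_3 − (1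 − c_1)^k − c_2/c_1. -/
/-!
Write `Pr X = ∑ ω ∈ X, p ω`. Each `E j` lies inside the event that no earlier `E q` occurred,
which survives each round with conditional probability at least `1 - c₁`; so
`Pr[E j] ≥ c₁ (1 - c₁)^j`. Inside `E j` the event that no `G q` with `q < j` occurred survives
each round with conditional probability at least `1 - c₂`, and on it success has probability at
least `1 - c₃`. The blocks `E j` are disjoint, so these contributions add up below `Pr[Success]`.
The closed form is a geometric sum with ratio `r = (1 - c₁)(1 - c₂)`, where
`c₁ ≤ 1 - r ≤ c₁ + c₂`.
-/

open Finset

section Avoiding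

variable {Ω : Type*} [Fintype Ω] [DecidableEq Ω] (p : Ω → ℝ)

theorem sum_inter_inf_compl_range_succ (S : Finset Ω) (B : ℕ → Finset Ω) (n : ℕ) :
    ∑ ω ∈ S ∩ (range (n + 1)).inf (fun q => (B q)ᶜ), p ω
      = ∑ ω ∈ S ∩ (range n).inf (fun q => (B q)ᶜ), p ω
        - ∑ ω ∈ B n ∩ (S ∩ (range n).inf (fun q => (B q)ᶜ)), p ω := by
  set T := S ∩ (range n).inf (fun q => (B q)ᶜ)
  have hsdiff : S ∩ (range (n + 1)).inf (fun q => (B q)ᶜ) = T \ B n := by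
    ext ω
    simp only [T, range_add_one, inf_insert, mem_inter, mem_sdiff, inf_eq_inter, mem_compl]
    tauto
  rw [hsdiff, inter_comm, ← sum_inter_add_sum_sdiff T (B n) p]
  ring

theorem pow_mul_sum_le_sum_inter_inf_compl (S : Finset Ω) (B : ℕ → Finset Ω) {c : ℝ}
    (hc : c ≤ 1) (m : ℕ)
    (h : ∀ n < m, ∑ ω ∈ B n ∩ (S ∩ (range n).inf (fun q => (B q)ᶜ)), p ω
      ≤ c * ∑ ω ∈ S ∩ (range n).inf (fun q => (B q)ᶜ), p ω) :
    (1 - c) ^ m * ∑ ω ∈ S, p ω ≤ ∑ ω ∈ S ∩ (range m).inf (fun q => (B q)ᶜ), p ω := by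
  induction m with
  | zero => simp
  | succ n ih =>
    have ih := ih fun q hq => h q (hq.trans n.lt_succ_self)
    rw [sum_inter_inf_compl_range_succ, pow_succ']
    nlinarith [h n n.lt_succ_self, mul_le_mul_of_nonneg_left ih (sub_nonneg.mpr hc)]

theorem mul_pow_le_sum_of_first_hit (hp1 : ∑ ω, p ω = 1) {c : ℝ} (hc₀ : 0 ≤ c) (hc₁ : c ≤ 1)
    {k : ℕ} (E : ℕ → Finset Ω)
    (hdisj : ∀ i j, i < k → j < k → i ≠ j → Disjoint (E i) (E j))
    (hfirst : ∀ j < k,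
      ∑ ω ∈ E j ∩ (range j).inf (fun q => (E q)ᶜ), p ω
        = c * ∑ ω ∈ (range j).inf (fun q => (E q)ᶜ), p ω)
    {j : ℕ} (hj : j < k) :
    c * (1 - c) ^ j ≤ ∑ ω ∈ E j, p ω := by
  have hsurvive : (1 - c) ^ j ≤ ∑ ω ∈ (range j).inf (fun q => (E q)ᶜ), p ω := by
    simpa [hp1] using pow_mul_sum_le_sum_inter_inf_compl p univ E hc₁ j fun n hn => by
      simpa using (hfirst n (hn.trans hj)).le
  have hsub : E j ⊆ (range j).inf (fun q => (E q)ᶜ) := by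
    refine Finset.le_inf fun q hq => ?_
    have hq := mem_range.mp hq
    exact (hdisj j q hj (hq.trans hj) hq.ne').le_compl_right
  rw [← inter_eq_left.mpr hsub, hfirst j hj]
  exact mul_le_mul_of_nonneg_left hsurvive hc₀

end Avoiding

theorem sum_sum_inter_le_sum {Ω ι : Type*} [DecidableEq Ω] (p : Ω → ℝ) (hp0 : ∀ ω, 0 ≤ p ω)
    (A : Finset Ω) (s : Finset ι) (F : ι → Finset Ω) (hF : (s : Set ι).PairwiseDisjoint F) :
    ∑ i ∈ s, ∑ ω ∈ A ∩ F i, p ω ≤ ∑ ω ∈ A, p ω := by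
  rw [← sum_biUnion (hF.mono_on fun i _ => inter_subset_right)]
  exact sum_le_sum_of_subset_of_nonneg (biUnion_subset.mpr fun _ _ => inter_subset_left)
    fun ω _ _ => hp0 ω

theorem one_sub_pow_sub_div_le_mul_geom_sum {r c₁ c₂ : ℝ} (hr : 0 ≤ r) (hc₁ : 0 < c₁)
    (hlo : c₁ ≤ 1 - r) (hhi : 1 - r ≤ c₁ + c₂) (k : ℕ) :
    1 - r ^ k - c₂ / c₁ ≤ c₁ * ∑ j ∈ range k, r ^ j := by
  set g := ∑ j ∈ range k, r ^ j
  have hg : (1 - r) * g = 1 - r ^ k := by linear_combination -geom_sum_mul r k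
  have hg0 : 0 ≤ g := sum_nonneg fun j _ => pow_nonneg hr j
  have hc₂ : 0 ≤ c₂ := by linarith
  have hc₁g : c₁ * g ≤ 1 := by
    nlinarith [mul_le_mul_of_nonneg_right hlo hg0, pow_nonneg hr k]
  have hc₂g : c₂ * g ≤ c₂ / c₁ := by
    rw [le_div_iff₀ hc₁]
    nlinarith [mul_le_mul_of_nonneg_left hc₁g hc₂]
  nlinarith [mul_le_mul_of_nonneg_right hhi hg0]

theorem one_sub_pow_sub_div_le_geom_sum {c₁ c₂ : ℝ} (hc₁ : 0 < c₁) (hc₁' : c₁ ≤ 1)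
    (hc₂ : 0 ≤ c₂) (hc₂' : c₂ ≤ 1) (k : ℕ) :
    1 - (1 - c₁) ^ k - c₂ / c₁ ≤ ∑ j ∈ range k, c₁ * (1 - c₁) ^ j * (1 - c₂) ^ j := by
  set r := (1 - c₁) * (1 - c₂) with hr_def
  have hr : 0 ≤ r := mul_nonneg (by linarith) (by linarith)
  have hr' : r ≤ 1 - c₁ := mul_le_of_le_one_right (by linarith) (by linarith)
  have hrk : r ^ k ≤ (1 - c₁) ^ k := pow_le_pow_left₀ hr hr' k
  have hsum : ∑ j ∈ range k, c₁ * (1 - c₁) ^ j * (1 - c₂) ^ j = c₁ * ∑ j ∈ range k, r ^ j := by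
    rw [mul_sum]
    exact sum_congr rfl fun j _ => by rw [mul_pow, mul_assoc]
  rw [hsum]
  have hhi : 1 - r ≤ c₁ + c₂ := by
    rw [hr_def]
    nlinarith [mul_nonneg hc₁.le hc₂]
  have := one_sub_pow_sub_div_le_mul_geom_sum hr hc₁ (by linarith) hhi k
  linarith

theorem block_success_probability_general
    {Ω : Type*} [Fintype Ω] [DecidableEq Ω] (p : Ω → ℝ)
    (hp0 : ∀ ω, 0 ≤ p ω) (hp1 : ∑ ω, p ω = 1)
    (c₁ c₂ c₃ : ℝ)
    (h₁ : 0 < c₁) (h₁' : c₁ ≤ 1) (h₂ : 0 ≤ c₂) (h₂' : c₂ ≤ 1)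
    (h₃ : 0 ≤ c₃) (h₃' : c₃ ≤ 1)
    (k : ℕ) (E G : ℕ → Finset Ω) (Success : Finset Ω)
    (hdisj : ∀ i j, i < k → j < k → i ≠ j → Disjoint (E i) (E j))
    (hi : ∀ j < k,
      ∑ ω ∈ E j ∩ (Finset.range j).inf (fun q => (E q)ᶜ), p ω
        = c₁ * ∑ ω ∈ (Finset.range j).inf (fun q => (E q)ᶜ), p ω)
    (hii : ∀ j < k, ∀ q < j,
      ∑ ω ∈ G q ∩ (E j ∩ (Finset.range q).inf (fun r => (G r)ᶜ)), p ω
        ≤ c₂ * ∑ ω ∈ E j ∩ (Finset.range q).inf (fun r => (G r)ᶜ), p ω)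
    (hiii : ∀ j < k,
      (1 - c₃) * ∑ ω ∈ E j ∩ (Finset.range j).inf (fun q => (G q)ᶜ), p ω
        ≤ ∑ ω ∈ Success ∩ (E j ∩ (Finset.range j).inf (fun q => (G q)ᶜ)), p ω) :
    (1 - c₃) * ∑ j ∈ Finset.range k, c₁ * (1 - c₁) ^ j * (1 - c₂) ^ j
        ≤ ∑ ω ∈ Success, p ω ∧
      1 - c₃ - (1 - c₁) ^ k - c₂ / c₁
        ≤ (1 - c₃) * ∑ j ∈ Finset.range k, c₁ * (1 - c₁) ^ j * (1 - c₂) ^ j := by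
  set F : ℕ → Finset Ω := fun j => E j ∩ (range j).inf (fun q => (G q)ᶜ)
  have hblock : ∀ j < k,
      (1 - c₃) * (c₁ * (1 - c₁) ^ j * (1 - c₂) ^ j) ≤ ∑ ω ∈ Success ∩ F j, p ω := by
    intro j hj
    have hE := mul_pow_le_sum_of_first_hit p hp1 h₁.le h₁' E hdisj hi hj
    have hF := pow_mul_sum_le_sum_inter_inf_compl p (E j) G h₂' j (hii j hj)
    refine le_trans (mul_le_mul_of_nonneg_left ?_ (sub_nonneg.mpr h₃')) (hiii j hj)
    nlinarith [mul_le_mul_of_nonneg_left hE (pow_nonneg (sub_nonneg.mpr h₂') j)]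
  have hFdisj : ((range k : Finset ℕ) : Set ℕ).PairwiseDisjoint F := fun i hi j hj hij =>
    (hdisj i j (mem_range.mp hi) (mem_range.mp hj) hij).mono inter_subset_left inter_subset_left
  constructor
  · rw [mul_sum]
    exact (sum_le_sum fun j hj => hblock j (mem_range.mp hj)).trans
      (sum_sum_inter_le_sum p hp0 Success _ F hFdisj)
  · have hgeom := one_sub_pow_sub_div_le_geom_sum h₁ h₁' h₂ h₂' k
    have hx : 1 - (1 - c₁) ^ k - c₂ / c₁ ≤ 1 := by
      have := div_nonneg h₂ h₁.le
      linarith [pow_nonneg (sub_nonneg.mpr h₁') k]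
    nlinarith [mul_le_mul_of_nonneg_left hgeom (sub_nonneg.mpr h₃')]

/-- Block-by-block success probability analysis. On a finite probability
space with weights `p`, let `E 0, …, E (k−1)` be pairwise disjoint events, `G j` further
events, and `Success` an event, such that (writing `Pr X = ∑_{ω ∈ X} p ω`, and all
conditional statements in multiplied-out form):
(i) `Pr[E j ∩ ⋂_{q<j} (E q)ᶜ] = c₁ · Pr[⋂_{q<j} (E q)ᶜ]`;
(ii) for `q < j`, `Pr[G q ∩ E j ∩ ⋂_{r<q} (G r)ᶜ] ≤ c₂ · Pr[E j ∩ ⋂_{r<q} (G r)ᶜ]`;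
(iii) `Pr[Success ∩ E j ∩ ⋂_{q<j} (G q)ᶜ] ≥ (1 − c₃) · Pr[E j ∩ ⋂_{q<j} (G q)ᶜ]`.
Then `Pr[Success] ≥ (1 − c₃)·∑_{j<k} c₁(1−c₁)^j(1−c₂)^j ≥ 1 − c₃ − (1−c₁)^k − c₂/c₁`. -/
theorem block_success_probability
    {Ω : Type*} [Fintype Ω] [DecidableEq Ω] (p : Ω → ℝ)
    (hp0 : ∀ ω, 0 ≤ p ω) (hp1 : ∑ ω, p ω = 1)
    (c₁ c₂ c₃ : ℝ)
    (h₁ : 0 < c₁) (h₁' : c₁ ≤ 1) (h₂ : 0 ≤ c₂) (h₂' : c₂ ≤ 1)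
    (h₃ : 0 ≤ c₃) (h₃' : c₃ ≤ 1) (hsum : c₁ + c₂ ≤ 1)
    (k : ℕ) (E G : ℕ → Finset Ω) (Success : Finset Ω)
    (hdisj : ∀ i j, i < k → j < k → i ≠ j → Disjoint (E i) (E j))
    (hi : ∀ j < k,
      ∑ ω ∈ E j ∩ (Finset.range j).inf (fun q => (E q)ᶜ), p ω
        = c₁ * ∑ ω ∈ (Finset.range j).inf (fun q => (E q)ᶜ), p ω)
    (hii : ∀ j < k, ∀ q < j,
      ∑ ω ∈ G q ∩ (E j ∩ (Finset.range q).inf (fun r => (G r)ᶜ)), p ω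
        ≤ c₂ * ∑ ω ∈ E j ∩ (Finset.range q).inf (fun r => (G r)ᶜ), p ω)
    (hiii : ∀ j < k,
      (1 - c₃) * ∑ ω ∈ E j ∩ (Finset.range j).inf (fun q => (G q)ᶜ), p ω
        ≤ ∑ ω ∈ Success ∩ (E j ∩ (Finset.range j).inf (fun q => (G q)ᶜ)), p ω) :
    (1 - c₃) * ∑ j ∈ Finset.range k, c₁ * (1 - c₁) ^ j * (1 - c₂) ^ j
        ≤ ∑ ω ∈ Success, p ω ∧
      1 - c₃ - (1 - c₁) ^ k - c₂ / c₁
        ≤ (1 - c₃) * ∑ j ∈ Finset.range k, c₁ * (1 - c₁) ^ j * (1 - c₂) ^ j :=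
  block_success_probability_general p hp0 hp1 c₁ c₂ c₃ h₁ h₁' h₂ h₂' h₃ h₃' k E G Success hdisj hi
    hii hiii
end
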